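/- arXiv:1309.0177 — 3 statements merged into one kernel-verified Lean document; each statement's English description precedes it below -/
import Mathlib

section
/- Let F : ℝ × ℝ → ℝ be twice continuously differentiable on a neighborhood of (σ₀, n₀) with ∂F/∂σ(σ₀, n₀) > 0, and let G : ℝ × ℝ → ℝ be twice continuously differentiable on a neighborhood of (F(σ₀,n₀), n₀) such that G(F(σ,n), n) = σ for all (σ,n) in a neighborhood of (σ₀,n₀). Then the Hessian (second derivative bilinear form) of F at (σ₀,n₀) is positive definite if and only if the Hessian of G at (F(σ₀,n₀), n₀) is negative definite. -/
/-! With `Φ (σ, n) = (F (σ, n), n)` the hypothesis says `G ∘ Φ = Prod.fst` near `p = (σ₀, n₀)`.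
Differentiating once gives `∂F/∂σ · DG (x, 0) = x`; differentiating twice, and using that the
second derivative of `Prod.fst` vanishes, gives
`D²G (DΦ v, DΦ w) + DG (D²F (v, w), 0) = 0`, hence `∂F/∂σ · D²G (DΦ v, DΦ v) = -D²F (v, v)`.
As `∂F/∂σ ≠ 0`, the linear map `DΦ v = (DF v, v.2)` is invertible, so the sign of `∂F/∂σ`
exchanges positive definiteness of `D²F` with negative definiteness of `D²G`. -/

open ContinuousLinearMap Filter Topology

section Calculus

variable {𝕜 : Type*} [NontriviallyNormedField 𝕜]
  {E F G : Type*} [NormedAddCommGroup E] [NormedSpace 𝕜 E] [NormedAddCommGroup F]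
  [NormedSpace 𝕜 F] [NormedAddCommGroup G] [NormedSpace 𝕜 G]

theorem ContDiffAt.differentiableAt_fderiv {f : E → F} {x : E} (hf : ContDiffAt 𝕜 2 f x) :
    DifferentiableAt 𝕜 (fderiv 𝕜 f) x :=
  (hf.fderiv_right (m := 1) le_rfl).differentiableAt one_ne_zero

theorem fderiv_fderiv_comp_apply {f : E → F} {g : F → G} {x : E}
    (hg : ContDiffAt 𝕜 2 g (f x)) (hf : ContDiffAt 𝕜 2 f x) (v w : E) :
    fderiv 𝕜 (fderiv 𝕜 (g ∘ f)) x v w =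
      fderiv 𝕜 (fderiv 𝕜 g) (f x) (fderiv 𝕜 f x v) (fderiv 𝕜 f x w) +
        fderiv 𝕜 g (f x) (fderiv 𝕜 (fderiv 𝕜 f) x v w) := by
  have hfd : DifferentiableAt 𝕜 f x := hf.differentiableAt two_ne_zero
  have hchain : fderiv 𝕜 (g ∘ f) =ᶠ[𝓝 x] fun y => (fderiv 𝕜 g (f y)).comp (fderiv 𝕜 f y) := by
    filter_upwards [hf.eventually (by simp),
      hfd.continuousAt.eventually (hg.eventually (by simp))] with y hfy hgy
    exact fderiv_comp y (hgy.differentiableAt two_ne_zero) (hfy.differentiableAt two_ne_zero)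
  have hgf : DifferentiableAt 𝕜 (fun y => fderiv 𝕜 g (f y)) x :=
    hg.differentiableAt_fderiv.comp x hfd
  rw [hchain.fderiv_eq, fderiv_clm_comp hgf hf.differentiableAt_fderiv,
    fderiv_fun_comp x hg.differentiableAt_fderiv hfd]
  simp only [add_apply, coe_comp, Function.comp_apply, compL_apply, flip_apply]
  exact add_comm _ _

theorem fderiv_fderiv_prodMk_apply {f : E → F} {g : E → G} {x : E}
    (hf : ContDiffAt 𝕜 2 f x) (hg : ContDiffAt 𝕜 2 g x) (v w : E) :
    fderiv 𝕜 (fderiv 𝕜 fun y => (f y, g y)) x v w =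
      (fderiv 𝕜 (fderiv 𝕜 f) x v w, fderiv 𝕜 (fderiv 𝕜 g) x v w) := by
  simpa [iteratedFDeriv_two_apply] using
    congrArg (· ![v, w]) (iteratedFDeriv_prodMk hf hg (i := 2) le_rfl)

theorem ContinuousLinearMap.fderiv_fderiv (L : E →L[𝕜] F) (x : E) :
    fderiv 𝕜 (fderiv 𝕜 L) x = 0 := by
  rw [show fderiv 𝕜 L = fun _ => L from funext fun _ => L.fderiv, fderiv_const_apply]

theorem fderiv_prodMk_snd_apply {f : E × F → G} {x : E × F} (hf : DifferentiableAt 𝕜 f x)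
    (v : E × F) : fderiv 𝕜 (fun y => (f y, y.2)) x v = (fderiv 𝕜 f x v, v.2) := by
  rw [hf.fderiv_prodMk differentiableAt_snd, fderiv_snd]
  rfl

theorem fderiv_fderiv_prodMk_snd_apply {f : E × F → G} {x : E × F} (hf : ContDiffAt 𝕜 2 f x)
    (v w : E × F) :
    fderiv 𝕜 (fderiv 𝕜 fun y => (f y, y.2)) x v w = (fderiv 𝕜 (fderiv 𝕜 f) x v w, 0) := by
  have hsnd : fderiv 𝕜 (fderiv 𝕜 (Prod.snd : E × F → F)) x = 0 := (snd 𝕜 E F).fderiv_fderiv x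
  rw [fderiv_fderiv_prodMk_apply (g := Prod.snd) hf contDiffAt_snd, hsnd]
  rfl

end Calculus

theorem forall_pos_iff_forall_neg_of_linearEquiv {E E' : Type*} [AddCommGroup E] [Module ℝ E]
    [AddCommGroup E'] [Module ℝ E'] (T : E ≃ₗ[ℝ] E') {Q : E → ℝ} {Q' : E' → ℝ} {a : ℝ}
    (ha : 0 < a) (hQ : ∀ v, a * Q' (T v) = -Q v) :
    (∀ v, v ≠ 0 → 0 < Q v) ↔ ∀ w, w ≠ 0 → Q' w < 0 := by
  rw [T.surjective.forall]
  refine forall_congr' fun v => ?_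
  rw [T.map_ne_zero_iff, ← neg_lt_zero, ← hQ, ← smul_eq_mul, smul_neg_iff_of_pos_left ha]

theorem LinearMap.prod_snd_injective {K E : Type*} [Field K] [AddCommGroup E] [Module K E]
    {A : K × E →ₗ[K] K} (hA : A (1, 0) ≠ 0) :
    Function.Injective (A.prod (LinearMap.snd K K E)) := by
  rw [← LinearMap.ker_eq_bot, LinearMap.ker_eq_bot']
  rintro ⟨x, y⟩ h
  simp only [LinearMap.prod_apply, LinearMap.coe_snd, Function.prod_apply, Prod.mk_eq_zero] at h
  obtain ⟨hx, rfl⟩ := h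
  have hAx : A (x, 0) = x * A (1, 0) := by
    rw [← smul_eq_mul, ← map_smul, Prod.smul_mk, smul_eq_mul, mul_one, smul_zero]
  rw [hAx, mul_eq_zero] at hx
  simp [hx.resolve_right hA]

section PartialInverse

variable {𝕜 E : Type*} [NontriviallyNormedField 𝕜] [NormedAddCommGroup E] [NormedSpace 𝕜 E]
  {F G : 𝕜 × E → 𝕜} {p : 𝕜 × E}

theorem fderiv_partialInverse_apply (hF : ContDiffAt 𝕜 2 F p) (hG : ContDiffAt 𝕜 2 G (F p, p.2))
    (hGF : (G ∘ fun q => (F q, q.2)) =ᶠ[𝓝 p] Prod.fst) (u : 𝕜 × E) :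
    fderiv 𝕜 G (F p, p.2) (fderiv 𝕜 F p u, u.2) = u.1 := by
  have hFd : DifferentiableAt 𝕜 F p := hF.differentiableAt two_ne_zero
  have hfst : fderiv 𝕜 (G ∘ fun q => (F q, q.2)) p u = u.1 := by
    rw [hGF.fderiv_eq, fderiv_fst]
    rfl
  rwa [fderiv_comp p (hG.differentiableAt two_ne_zero) (hFd.prodMk differentiableAt_snd),
    coe_comp, Function.comp_apply, fderiv_prodMk_snd_apply hFd] at hfst

theorem mul_fderiv_fderiv_partialInverse_apply (hF : ContDiffAt 𝕜 2 F p)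
    (hG : ContDiffAt 𝕜 2 G (F p, p.2)) (hGF : (G ∘ fun q => (F q, q.2)) =ᶠ[𝓝 p] Prod.fst)
    (v w : 𝕜 × E) :
    fderiv 𝕜 F p (1, 0) *
        fderiv 𝕜 (fderiv 𝕜 G) (F p, p.2) (fderiv 𝕜 F p v, v.2) (fderiv 𝕜 F p w, w.2) =
      -fderiv 𝕜 (fderiv 𝕜 F) p v w := by
  set a := fderiv 𝕜 F p (1, 0)
  have hΦ : ContDiffAt 𝕜 2 (fun q => (F q, q.2)) p := hF.prodMk contDiffAt_snd
  have hDG : ∀ y, a * fderiv 𝕜 G (F p, p.2) (y, 0) = y := fun y => by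
    have hAy : (fderiv 𝕜 F p (y, 0), (0 : E)) = a • (y, 0) := by
      rw [show ((y, 0) : 𝕜 × E) = y • (1, 0) by simp, map_smul]
      simp [a, mul_comm]
    rw [← smul_eq_mul, ← map_smul, ← hAy, fderiv_partialInverse_apply hF hG hGF]
  have hsecond : fderiv 𝕜 (fderiv 𝕜 (G ∘ fun q => (F q, q.2))) p v w = 0 := by
    have hfst : fderiv 𝕜 (fderiv 𝕜 (Prod.fst : 𝕜 × E → 𝕜)) p = 0 :=
      (fst 𝕜 𝕜 E).fderiv_fderiv p
    rw [hGF.fderiv.fderiv_eq, hfst]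
    rfl
  have hFd : DifferentiableAt 𝕜 F p := hF.differentiableAt two_ne_zero
  rw [fderiv_fderiv_comp_apply (f := fun q => (F q, q.2)) hG hΦ, fderiv_prodMk_snd_apply hFd,
    fderiv_prodMk_snd_apply hFd, fderiv_fderiv_prodMk_snd_apply hF] at hsecond
  linear_combination a * hsecond - hDG (fderiv 𝕜 (fderiv 𝕜 F) p v w)

end PartialInverse

/-- If `G(F(σ,n), n) = σ` near `(σ₀,n₀)` and `∂F/∂σ(σ₀,n₀) > 0`, then the Hessian of `F`
at `(σ₀,n₀)` is positive definite iff the Hessian of `G` at `(F(σ₀,n₀), n₀)` is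
negative definite. -/
theorem hessian_pos_def_iff_inverse_hessian_neg_def
    (F G : ℝ × ℝ → ℝ) (σ₀ n₀ : ℝ)
    (hF : ContDiffAt ℝ 2 F (σ₀, n₀))
    (hFσ : 0 < fderiv ℝ F (σ₀, n₀) (1, 0))
    (hG : ContDiffAt ℝ 2 G (F (σ₀, n₀), n₀))
    (hGF : ∀ᶠ q : ℝ × ℝ in nhds (σ₀, n₀), G (F q, q.2) = q.1) :
    (∀ v : ℝ × ℝ, v ≠ 0 → 0 < iteratedFDeriv ℝ 2 F (σ₀, n₀) ![v, v]) ↔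
      (∀ v : ℝ × ℝ, v ≠ 0 → iteratedFDeriv ℝ 2 G (F (σ₀, n₀), n₀) ![v, v] < 0) := by
  let A : ℝ × ℝ →ₗ[ℝ] ℝ := fderiv ℝ F (σ₀, n₀)
  let T : (ℝ × ℝ) ≃ₗ[ℝ] ℝ × ℝ :=
    .ofInjectiveEndo (A.prod (LinearMap.snd ℝ ℝ ℝ)) (LinearMap.prod_snd_injective hFσ.ne')
  simp only [iteratedFDeriv_two_apply, Matrix.cons_val_zero, Matrix.cons_val_one]
  exact forall_pos_iff_forall_neg_of_linearEquiv T hFσ fun v =>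
    mul_fderiv_fderiv_partialInverse_apply hF hG hGF v v
end

section
/- Let (X, 𝔪) be a measure space with 0 < 𝔪(X) < ∞, and let a, b, c : X → ℝ be bounded measurable functions with b(x) > 0 for 𝔪-almost every x. Then the following are equivalent: (i) each of a, b, c is 𝔪-almost everywhere equal to a constant; (ii) for all integrable functions f, g, h : X → ℝ satisfying ∫f d𝔪 = 0, ∫h d𝔪 = 0, and ∫(a·f + b·g + c·h) d𝔪 = 0, one has ∫g d𝔪 = 0. -/
/-!
If `a, b, c` are a.e. constant, the constraint reads `ka ∫ f + kb ∫ g + kc ∫ h = 0`, which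
forces `∫ g = 0` because `kb > 0`. Conversely, given `f, g, h` of zero mean, shifting `g` by the
constant `t = -∫ (a f + b g + c h) / ∫ b` produces an admissible triple, so `t μ(X) = 0`, hence
`t = 0`: the combination `∫ (a f + b g + c h)` vanishes on all mean-zero triples. Testing it
against `u - ⨍ u` for `u ∈ {a, b, c}` gives `∫ (u - ⨍ u)² = 0`.
-/

open MeasureTheory

section

variable {X : Type*} [MeasurableSpace X] {μ : Measure X}

theorem integral_pos_of_ae_pos [NeZero μ] {b : X → ℝ} (hb : Integrable b μ)
    (hpos : ∀ᵐ x ∂μ, 0 < b x) : 0 < ∫ x, b x ∂μ := by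
  refine (integral_nonneg_of_ae (hpos.mono fun _ => le_of_lt)).lt_of_ne fun h => ?_
  have hb0 := (integral_eq_zero_iff_of_nonneg_ae (hpos.mono fun _ => le_of_lt) hb).1 h.symm
  obtain ⟨x, hx, hx0⟩ := (hpos.and hb0).exists
  exact hx.ne' hx0

theorem ae_eq_const_of_forall_integral_mul_eq_zero [IsFiniteMeasure μ] {u : X → ℝ}
    (hu : MemLp u 2 μ)
    (H : ∀ f : X → ℝ, Integrable f μ → ∫ x, f x ∂μ = 0 → ∫ x, u x * f x ∂μ = 0) :
    ∃ k : ℝ, u =ᵐ[μ] fun _ => k := by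
  set α := ⨍ x, u x ∂μ
  have hv : MemLp (fun x => u x - α) 2 μ := hu.sub (memLp_const α)
  have hv0 : ∫ x, u x - α ∂μ = 0 := integral_sub_average μ u
  have huv : Integrable (fun x => u x * (u x - α)) μ := hu.integrable_mul hv
  have hsq : ∫ x, (u x - α) ^ 2 ∂μ = 0 := calc
    ∫ x, (u x - α) ^ 2 ∂μ = ∫ x, u x * (u x - α) ∂μ - α * ∫ x, u x - α ∂μ := by
      rw [← integral_const_mul, ← integral_sub huv ((hv.integrable one_le_two).const_mul α)]
      congr 1; ext x; ring
    _ = 0 := by rw [H _ (hv.integrable one_le_two) hv0, hv0]; ring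
  refine ⟨α, ?_⟩
  filter_upwards [(integral_eq_zero_iff_of_nonneg (fun x => sq_nonneg _) hv.integrable_sq).1 hsq]
    with x hx
  exact sub_eq_zero.1 (pow_eq_zero_iff two_ne_zero |>.1 hx)

theorem integral_eq_zero_of_integral_combination_eq_zero {a b c f g h : X → ℝ} {ka kb kc : ℝ}
    (ha : a =ᵐ[μ] fun _ => ka) (hb : b =ᵐ[μ] fun _ => kb) (hc : c =ᵐ[μ] fun _ => kc)
    (hkb : kb ≠ 0) (hf : Integrable f μ) (hg : Integrable g μ) (hh : Integrable h μ)
    (hf0 : ∫ x, f x ∂μ = 0) (hh0 : ∫ x, h x ∂μ = 0)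
    (hS : ∫ x, (a x * f x + b x * g x + c x * h x) ∂μ = 0) : ∫ x, g x ∂μ = 0 := by
  have hconst : (fun x => a x * f x + b x * g x + c x * h x)
      =ᵐ[μ] fun x => ka * f x + kb * g x + kc * h x := by
    filter_upwards [ha, hb, hc] with x hax hbx hcx
    rw [hax, hbx, hcx]
  rw [integral_congr_ae hconst, integral_add (by fun_prop) (by fun_prop),
    integral_add (by fun_prop) (by fun_prop), integral_const_mul,
    integral_const_mul, integral_const_mul, hf0, hh0] at hS
  simpa [hkb] using hS

theorem integral_combination_eq_zero_of_forall [IsFiniteMeasure μ] [NeZero μ] {a b c : X → ℝ}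
    (ha : MemLp a ⊤ μ) (hb : MemLp b ⊤ μ) (hc : MemLp c ⊤ μ) (hb0 : ∫ x, b x ∂μ ≠ 0)
    (H : ∀ f g h : X → ℝ, Integrable f μ → Integrable g μ → Integrable h μ →
      ∫ x, f x ∂μ = 0 → ∫ x, h x ∂μ = 0 →
      ∫ x, (a x * f x + b x * g x + c x * h x) ∂μ = 0 → ∫ x, g x ∂μ = 0)
    {f g h : X → ℝ} (hf : Integrable f μ) (hg : Integrable g μ) (hh : Integrable h μ)
    (hf0 : ∫ x, f x ∂μ = 0) (hg0 : ∫ x, g x ∂μ = 0) (hh0 : ∫ x, h x ∂μ = 0) :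
    ∫ x, (a x * f x + b x * g x + c x * h x) ∂μ = 0 := by
  set S := ∫ x, (a x * f x + b x * g x + c x * h x) ∂μ
  set t := -S / ∫ x, b x ∂μ
  have hS : Integrable (fun x => a x * f x + b x * g x + c x * h x) μ :=
    ((hf.mul_of_top_right ha).add (hg.mul_of_top_right hb)).add (hh.mul_of_top_right hc)
  have hshift : ∫ x, (a x * f x + b x * (g x + t) + c x * h x) ∂μ = 0 := calc
    _ = S + t * ∫ x, b x ∂μ := by
      rw [← integral_const_mul, ← integral_add hS ((hb.integrable le_top).const_mul t)]
      congr 1; ext x; ring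
    _ = 0 := by rw [div_mul_cancel₀ _ hb0]; ring
  have ht : μ.real Set.univ * t = 0 := by
    simpa [integral_add hg (integrable_const t), hg0] using
      H f _ h hf (hg.add (integrable_const t)) hh hf0 hh0 hshift
  have : t = 0 := (mul_eq_zero.1 ht).resolve_left measureReal_univ_ne_zero
  simpa [t, hb0] using this

end

/-- Integration-theoretic core of Theorem 1: with `b > 0` a.e., the functions `a, b, c`
are a.e. constant iff every integrable triple `(f,g,h)` with `∫ f = 0`, `∫ h = 0` and
`∫ (a f + b g + c h) = 0` has `∫ g = 0`. -/
theorem ae_const_iff_forced_vanishing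
    {X : Type*} [MeasurableSpace X] (𝔪 : Measure X)
    (h𝔪0 : 0 < 𝔪 Set.univ) (h𝔪fin : 𝔪 Set.univ < ⊤)
    (a b c : X → ℝ)
    (hma : Measurable a) (hmb : Measurable b) (hmc : Measurable c)
    (hba : ∃ C : ℝ, ∀ x, |a x| ≤ C) (hbb : ∃ C : ℝ, ∀ x, |b x| ≤ C)
    (hbc : ∃ C : ℝ, ∀ x, |c x| ≤ C)
    (hbpos : ∀ᵐ x ∂𝔪, 0 < b x) :
    ((∃ ka : ℝ, a =ᵐ[𝔪] fun _ => ka) ∧ (∃ kb : ℝ, b =ᵐ[𝔪] fun _ => kb)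
        ∧ (∃ kc : ℝ, c =ᵐ[𝔪] fun _ => kc)) ↔
      (∀ f g h : X → ℝ, Integrable f 𝔪 → Integrable g 𝔪 → Integrable h 𝔪 →
        (∫ x, f x ∂𝔪) = 0 → (∫ x, h x ∂𝔪) = 0 →
        (∫ x, (a x * f x + b x * g x + c x * h x) ∂𝔪) = 0 →
        (∫ x, g x ∂𝔪) = 0) := by
  have : IsFiniteMeasure 𝔪 := ⟨h𝔪fin⟩
  have : NeZero 𝔪 := ⟨Measure.measure_univ_pos.1 h𝔪0⟩
  have hbdd (u : X → ℝ) (hu : Measurable u) : (∃ C : ℝ, ∀ x, |u x| ≤ C) → MemLp u ⊤ 𝔪 :=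
    fun ⟨C, hC⟩ => memLp_top_of_bound hu.aestronglyMeasurable C (ae_of_all _ hC)
  have ha := hbdd a hma hba
  have hb := hbdd b hmb hbb
  have hc := hbdd c hmc hbc
  constructor
  · rintro ⟨⟨ka, hka⟩, ⟨kb, hkb⟩, ⟨kc, hkc⟩⟩ f g h hf hg hh hf0 hh0 hS
    obtain ⟨x, hbx, rfl⟩ := (hbpos.and hkb).exists
    exact integral_eq_zero_of_integral_combination_eq_zero hka hkb hkc hbx.ne' hf hg hh hf0 hh0 hS
  · intro H
    have hb0 := (integral_pos_of_ae_pos (hb.integrable le_top) hbpos).ne'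
    have h0 : Integrable (fun _ : X => (0 : ℝ)) 𝔪 := integrable_const 0
    have hz : ∫ _ : X, (0 : ℝ) ∂𝔪 = 0 := integral_zero X ℝ
    refine ⟨?_, ?_, ?_⟩ <;> refine ae_eq_const_of_forall_integral_mul_eq_zero
      ((‹MemLp _ ⊤ 𝔪›).mono_exponent le_top) fun u hu hu0 => ?_
    · simpa using integral_combination_eq_zero_of_forall ha hb hc hb0 H hu h0 h0 hu0 hz hz
    · simpa using integral_combination_eq_zero_of_forall ha hb hc hb0 H h0 hu h0 hz hu0 hz
    · simpa using integral_combination_eq_zero_of_forall ha hb hc hb0 H h0 h0 hu hz hz hu0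
end

section
/- Let K be a real Hilbert space and let Ŵ : K → K be a surjective linear isometry satisfying Ŵ(Ŵ(x)) = −x for all x ∈ K. For a subspace 𝒮 ⊆ K, define its symplectic complement 𝒮^⊥ₛ := {v ∈ K : ⟨v, Ŵ(u)⟩ = 0 for all u ∈ 𝒮}. Let 𝒢 ⊆ K be a subspace and set 𝒞 := 𝒢^⊥ₛ. Then {v ∈ 𝒞 : ⟨v, Ŵ(u)⟩ = 0 for all u ∈ 𝒞} = 𝒞 ∩ closure(𝒢); that is, the degeneracies of the symplectic pairing restricted to 𝒞 × 𝒞 are precisely the elements of the closure of 𝒢 lying in 𝒞. -/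
/-! Writing `W G` for the image of `G`, the hypothesis says `C = (W G)ᗮ`, and `v` is a degeneracy
exactly when `v ⊥ W C`. Since `W` is an isometry with `W² = -1`, it is onto and maps orthogonal
complements to orthogonal complements, so `W C = (W (W G))ᗮ = Gᗮ`; hence the degeneracies are
`C ∩ Gᗮᗮ = C ∩ closure G` by completeness. -/

open Submodule

namespace LinearMap

variable {R M : Type*} [Ring R] [AddCommGroup M] [Module R M] {f : M →ₗ[R] M}

theorem range_eq_top_of_apply_apply_eq_neg (hf : ∀ x, f (f x) = -x) : range f = ⊤ :=
  range_eq_top.mpr fun x => ⟨f (-x), by simp [hf]⟩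

theorem map_map_eq_self_of_apply_apply_eq_neg (hf : ∀ x, f (f x) = -x) (S : Submodule R M) :
    (S.map f).map f = S := by
  have hsq : f ∘ₗ f = -id := by
    ext x; exact hf x
  rw [← map_comp, hsq, Submodule.map_neg, map_id]

end LinearMap

namespace LinearIsometry

variable {𝕜 E : Type*} [RCLike 𝕜] [NormedAddCommGroup E] [InnerProductSpace 𝕜 E]

theorem setOf_forall_inner_map_eq_zero (W : E →ₗᵢ[𝕜] E) (S : Submodule 𝕜 E) :
    {v | ∀ u ∈ S, inner 𝕜 v (W u) = 0} = ((S.map W.toLinearMap)ᗮ : Set E) := by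
  ext v
  simp only [Set.mem_ofPred_eq, SetLike.mem_coe, mem_orthogonal', mem_map, coe_toLinearMap,
    forall_exists_index, and_imp, forall_apply_eq_imp_iff₂]

theorem map_orthogonal_map_of_apply_apply_eq_neg {W : E →ₗᵢ[𝕜] E} (hW2 : ∀ x, W (W x) = -x)
    (S : Submodule 𝕜 E) : (S.map W.toLinearMap)ᗮ.map W.toLinearMap = Sᗮ := by
  rw [map_orthogonal, LinearMap.map_map_eq_self_of_apply_apply_eq_neg hW2,
    LinearMap.range_eq_top_of_apply_apply_eq_neg hW2, inf_top_eq]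

end LinearIsometry

theorem degeneracies_of_restricted_symplectic_form_general
    {K : Type*} [NormedAddCommGroup K] [InnerProductSpace ℝ K] [CompleteSpace K]
    (W : K →ₗᵢ[ℝ] K)
    (hW2 : ∀ x : K, W (W x) = -x)
    (G : Submodule ℝ K) (C : Set K)
    (hC : C = {v : K | ∀ u ∈ G, (inner ℝ v (W u) : ℝ) = 0}) :
    {v ∈ C | ∀ u ∈ C, (inner ℝ v (W u) : ℝ) = 0} = C ∩ closure (G : Set K) := by
  rw [LinearIsometry.setOf_forall_inner_map_eq_zero] at hC
  calc {v ∈ C | ∀ u ∈ C, (inner ℝ v (W u) : ℝ) = 0}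
      = C ∩ {v | ∀ u ∈ (G.map W.toLinearMap)ᗮ, (inner ℝ v (W u) : ℝ) = 0} := by
        rw [hC]; rfl
    _ = C ∩ ((G.map W.toLinearMap)ᗮ.map W.toLinearMap)ᗮ := by
        rw [LinearIsometry.setOf_forall_inner_map_eq_zero]
    _ = C ∩ closure (G : Set K) := by
        rw [LinearIsometry.map_orthogonal_map_of_apply_apply_eq_neg hW2,
          orthogonal_orthogonal_eq_closure]
        rfl

/-- Let `𝒢` be a subspace of a real Hilbert space `K`, `Ŵ` a surjective linear isometry
with `Ŵ² = -I`, and `𝒞 := 𝒢^⊥ₛ` its symplectic complement. Then the degeneracies of the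
symplectic pairing restricted to `𝒞 × 𝒞` are exactly `𝒞 ∩ closure 𝒢`. -/
theorem degeneracies_of_restricted_symplectic_form
    {K : Type*} [NormedAddCommGroup K] [InnerProductSpace ℝ K] [CompleteSpace K]
    (W : K →ₗᵢ[ℝ] K) (hsurj : Function.Surjective W)
    (hW2 : ∀ x : K, W (W x) = -x)
    (G : Submodule ℝ K) (C : Set K)
    (hC : C = {v : K | ∀ u ∈ G, (inner ℝ v (W u) : ℝ) = 0}) :
    {v ∈ C | ∀ u ∈ C, (inner ℝ v (W u) : ℝ) = 0} = C ∩ closure (G : Set K) :=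
  degeneracies_of_restricted_symplectic_form_general W hW2 G C hC
end
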